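/- Let Φ be an IFS on ℝ satisfying the open set condition whose self-similar set F has Minkowski dimension equal to 1. Then F is Minkowski measurable; that is, λ(F_ε) converges to a positive finite limit as ε → 0+. -/

import Mathlib

open Set Filter MeasureTheory Metric Topology

/-- An iterated function system (IFS) on `ℝ`: a finite family of contracting
similarities `φ i` with similarity ratios `r i ∈ (0,1)`. -/
structure IFS (N : ℕ) where
  φ : Fin N → ℝ → ℝ
  r : Fin N → ℝ
  r_pos : ∀ i, 0 < r i
  r_lt_one : ∀ i, r i < 1
  similar : ∀ i x y, |φ i x - φ i y| = r i * |x - y|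

namespace IFS

variable {N : ℕ}

/-- The natural action `ΦA = ⋃ i φ i(A)` of an IFS on subsets of `ℝ`. -/
def map (Φ : IFS N) (A : Set ℝ) : Set ℝ := ⋃ i, Φ.φ i '' A

/-- A nonempty open set `O` is feasible for `Φ` if `φ i (O) ⊆ O` for all `i`
and the images `φ i (O)` are pairwise disjoint. -/
def Feasible (Φ : IFS N) (O : Set ℝ) : Prop :=
  O.Nonempty ∧ IsOpen O ∧ (∀ i, Φ.φ i '' O ⊆ O) ∧
    ∀ i j, i ≠ j → Disjoint (Φ.φ i '' O) (Φ.φ j '' O)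

/-- The open set condition: existence of a feasible open set. -/
def OSC (Φ : IFS N) : Prop := ∃ O : Set ℝ, Φ.Feasible O

/-- `F` is the self-similar set (attractor) of `Φ`: the (unique) nonempty
compact set with `ΦF = F`. -/
def IsAttractor (Φ : IFS N) (F : Set ℝ) : Prop :=
  F.Nonempty ∧ IsCompact F ∧ Φ.map F = F

/-- `Φ` is lattice if the additive subgroup of `ℝ` generated by the `log (r i)`
is discrete, equivalently all `log (r i)` lie in `aℤ` for some `a > 0`. -/
def IsLattice (Φ : IFS N) : Prop :=
  ∃ a : ℝ, 0 < a ∧ ∀ i, ∃ k : ℤ, Real.log (Φ.r i) = k * a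

/-- `ρ = e^{-a}` is the base of the lattice IFS `Φ`, where `a > 0` is maximal
with `log (r i) ∈ aℤ` for all `i`. -/
def IsLatticeBase (Φ : IFS N) (ρ : ℝ) : Prop :=
  ∃ a : ℝ, 0 < a ∧ ρ = Real.exp (-a) ∧
    (∀ i, ∃ k : ℤ, Real.log (Φ.r i) = k * a) ∧
    ∀ b : ℝ, 0 < b → (∀ i, ∃ k : ℤ, Real.log (Φ.r i) = k * b) → b ≤ a

/-- For a finite word `ω = ω₁⋯ωₙ`, the composition `φ_ω = φ_{ω₁} ∘ ⋯ ∘ φ_{ωₙ}`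
(the empty word giving the identity). -/
def wordMap (Φ : IFS N) (ω : List (Fin N)) : ℝ → ℝ :=
  ω.foldr (fun i f => Φ.φ i ∘ f) id

end IFS

/-- `y` is the unique nearest point of `x` in `F`. -/
def UniqueNearest (F : Set ℝ) (x y : ℝ) : Prop :=
  y ∈ F ∧ dist x y = Metric.infDist x F ∧
    ∀ z ∈ F, dist x z = Metric.infDist x F → z = y

/-- The projection condition for a feasible open set `O`:
`φ i (O) ⊆ closure (π_F⁻¹ (φ i (F)))` for all `i`, where `π_F` is the metric
projection onto `F` (defined where the nearest point in `F` is unique). -/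
def IFS.ProjCond {N : ℕ} (Φ : IFS N) (F O : Set ℝ) : Prop :=
  ∀ i, Φ.φ i '' O ⊆ closure {x : ℝ | ∃ y, UniqueNearest F x y ∧ y ∈ Φ.φ i '' F}

/-- `F` has Minkowski dimension `D`:
`1 - log λ(F_ε) / log ε → D` as `ε → 0+`. -/
def HasMinkowskiDim (F : Set ℝ) (D : ℝ) : Prop :=
  Filter.Tendsto
    (fun ε : ℝ => 1 - Real.log (volume (Metric.cthickening ε F)).toReal / Real.log ε)
    (𝓝[>] (0:ℝ)) (𝓝 D)

/-- `F` (of Minkowski dimension `D`) is Minkowski measurable: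
`ε^(D-1) λ(F_ε)` converges to a positive finite limit as `ε → 0+`. -/
def MinkowskiMeasurable (F : Set ℝ) (D : ℝ) : Prop :=
  ∃ M : ℝ, 0 < M ∧
    Filter.Tendsto (fun ε : ℝ => ε ^ (D - 1) * (volume (Metric.cthickening ε F)).toReal)
      (𝓝[>] (0:ℝ)) (𝓝 M)

/-!
Covering `F_ε` by the images `φᵢ(F_{ε/rᵢ})` gives `λ(F_{ρε}) ≤ (∑ rᵢ) λ(F_ε)` for `ρ = min rᵢ`,
so Minkowski dimension `1` forces `∑ rᵢ ≥ 1`; the disjoint images of a bounded feasible open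
set `O` force `∑ rᵢ ≤ 1`. Hence `∑ rᵢ = 1`, and the iterates `Φⁿ(O)` keep the measure of `O`
while shrinking into arbitrarily thin neighbourhoods of `F`. Therefore `λ(F) ≥ λ(O) > 0`, and
`λ(F_ε) → λ(F)` because `F` is compact.
-/

open scoped ENNReal Pointwise

theorem exists_eq_mul_add_of_abs_sub_eq {f : ℝ → ℝ} {r : ℝ}
    (hf : ∀ x y, |f x - f y| = r * |x - y|) : ∃ c, |c| = r ∧ ∀ x, f x = c * x + f 0 := by
  set g := fun x => f x - f 0
  have hsq : ∀ x y, (g x - g y) ^ 2 = r ^ 2 * (x - y) ^ 2 := fun x y => by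
    rw [← sq_abs, show g x - g y = f x - f y by simp [g], hf, mul_pow, sq_abs]
  -- polarisation: `g` multiplies inner products by `r²`
  have hmul : ∀ x y, g x * g y = r ^ 2 * (x * y) := fun x y => by
    have hx := hsq x 0
    have hy := hsq y 0
    simp only [sub_zero] at hx hy
    linear_combination (hsq x y - hx - hy) / (-2)
  have h1 : g 1 ^ 2 = r ^ 2 := by linear_combination hmul 1 1
  have hr : 0 ≤ r := by simpa using (abs_nonneg _).trans_eq (hf 1 0)
  refine ⟨g 1, by rwa [← abs_of_nonneg hr, ← sq_eq_sq_iff_abs_eq_abs], fun x => ?_⟩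
  suffices g x = g 1 * x by simp only [g] at this; linarith
  by_cases h0 : g 1 = 0
  · rw [h0, zero_mul, ← pow_eq_zero_iff two_ne_zero]
    linear_combination hmul x x - x ^ 2 * h1 + x ^ 2 * g 1 * h0
  · exact mul_right_cancel₀ h0 (by linear_combination hmul x 1 - x * h1)

section Similarity

variable {α β : Type*} [PseudoMetricSpace α] [PseudoMetricSpace β] {f : α → β} {r : ℝ}

theorem image_closedBall_of_dist_eq (hf : Function.Surjective f)
    (hdist : ∀ x y, dist (f x) (f y) = r * dist x y) (hr : 0 < r) (x : α) (δ : ℝ) :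
    f '' closedBall x δ = closedBall (f x) (r * δ) := by
  refine Subset.antisymm ?_ fun z hz => ?_
  · rintro _ ⟨y, hy, rfl⟩
    rw [mem_closedBall, hdist] at *
    exact mul_le_mul_of_nonneg_left hy hr.le
  · obtain ⟨y, rfl⟩ := hf z
    rw [mem_closedBall, hdist, mul_le_mul_iff_right₀ hr] at hz
    exact mem_image_of_mem f hz

theorem IsCompact.image_cthickening_of_dist_eq {s : Set α} (hs : IsCompact s)
    (hf : Function.Surjective f) (hdist : ∀ x y, dist (f x) (f y) = r * dist x y)
    (hr : 0 < r) {δ : ℝ} (hδ : 0 ≤ δ) :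
    f '' cthickening δ s = cthickening (r * δ) (f '' s) := by
  have hcont : Continuous f :=
    (LipschitzWith.of_dist_le_mul (K := ⟨r, hr.le⟩) fun x y => (hdist x y).le).continuous
  rw [hs.cthickening_eq_biUnion_closedBall hδ,
    (hs.image hcont).cthickening_eq_biUnion_closedBall (by positivity),
    image_iUnion₂, biUnion_image]
  simp_rw [image_closedBall_of_dist_eq hf hdist hr]

end Similarity

theorem cthickening_iUnion_of_finite {ι α : Type*} [Finite ι] [PseudoEMetricSpace α] (δ : ℝ)
    (s : ι → Set α) : cthickening δ (⋃ i, s i) = ⋃ i, cthickening δ (s i) := by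
  refine Subset.antisymm (fun x hx => ?_)
    (iUnion_subset fun i => cthickening_subset_of_subset δ (subset_iUnion s i))
  rw [mem_cthickening_iff, infEDist_iUnion] at hx
  cases isEmpty_or_nonempty ι
  · simp [iInf_of_empty] at hx
  · obtain ⟨i, hi⟩ := exists_eq_ciInf_of_finite (f := fun i => infEDist x (s i))
    exact mem_iUnion.2 ⟨i, by rwa [mem_cthickening_iff, hi]⟩

theorem measure_cthickening_pow_mul_le {α : Type*} [PseudoMetricSpace α] [MeasurableSpace α]
    {μ : Measure α} {s : Set α} {ρ : ℝ} {c : ℝ≥0∞} (hρ : 0 < ρ)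
    (hscale : ∀ ε > 0, μ (cthickening (ρ * ε) s) ≤ c * μ (cthickening ε s))
    {ε : ℝ} (hε : 0 < ε) (n : ℕ) :
    μ (cthickening (ρ ^ n * ε) s) ≤ c ^ n * μ (cthickening ε s) := by
  induction n with
  | zero => simp
  | succ n ih =>
    calc μ (cthickening (ρ ^ (n + 1) * ε) s) ≤ c * μ (cthickening (ρ ^ n * ε) s) := by
          rw [pow_succ', mul_assoc]; exact hscale _ (by positivity)
      _ ≤ c ^ (n + 1) * μ (cthickening ε s) := by
          rw [pow_succ', mul_assoc]; gcongr

theorem HasMinkowskiDim.le_one_sub_log_div_log {F : Set ℝ} {D ρ θ : ℝ}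
    (hD : HasMinkowskiDim F D) (hne : F.Nonempty) (hbdd : Bornology.IsBounded F)
    (hρ₀ : 0 < ρ) (hρ₁ : ρ < 1) (hθ : 0 < θ)
    (hscale : ∀ ε > 0,
      volume (cthickening (ρ * ε) F) ≤ ENNReal.ofReal θ * volume (cthickening ε F)) :
    D ≤ 1 - Real.log θ / Real.log ρ := by
  set v := fun ε => (volume (cthickening ε F)).toReal
  have hfin : ∀ ε, volume (cthickening ε F) ≠ ∞ := fun ε => hbdd.cthickening.measure_lt_top.ne
  have hv_pos : ∀ ε > 0, 0 < v ε := fun ε hε =>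
    have ⟨y, hy⟩ := hne
    ENNReal.toReal_pos ((measure_closedBall_pos volume y hε).trans_le
      (measure_mono (closedBall_subset_cthickening hy ε))).ne' (hfin ε)
  have hv_pow (n : ℕ) : v (ρ ^ n) ≤ θ ^ n * v 1 := by
    have := measure_cthickening_pow_mul_le hρ₀ hscale one_pos n
    rw [mul_one] at this
    simpa [v, ENNReal.toReal_mul, ENNReal.toReal_pow, hθ.le] using
      ENNReal.toReal_mono (ENNReal.mul_ne_top (by simp) (hfin 1)) this
  have hlogρ : Real.log ρ < 0 := Real.log_neg hρ₀ hρ₁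
  have hbound (n : ℕ) (hn : 0 < n) : 1 - Real.log (v (ρ ^ n)) / Real.log (ρ ^ n) ≤
      1 - Real.log θ / Real.log ρ - Real.log (v 1) / Real.log ρ / n := by
    have hlog : Real.log (v (ρ ^ n)) ≤ n * Real.log θ + Real.log (v 1) := by
      calc _ ≤ Real.log (θ ^ n * v 1) := Real.log_le_log (hv_pos _ (pow_pos hρ₀ n)) (hv_pow n)
        _ = _ := by rw [Real.log_mul (by positivity) (hv_pos 1 one_pos).ne', Real.log_pow]
    have hn' : (0 : ℝ) < n := Nat.cast_pos.2 hn
    have hdiv := div_le_div_of_nonpos_of_le (mul_neg_of_pos_of_neg hn' hlogρ).le hlog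
    have hsplit : (n * Real.log θ + Real.log (v 1)) / (n * Real.log ρ) =
        Real.log θ / Real.log ρ + Real.log (v 1) / Real.log ρ / n := by
      field_simp
    rw [Real.log_pow]
    linarith
  have hlim : Tendsto (fun n : ℕ => 1 - Real.log θ / Real.log ρ - Real.log (v 1) / Real.log ρ / n)
      atTop (𝓝 (1 - Real.log θ / Real.log ρ)) := by
    simpa using tendsto_const_nhds.sub
      (tendsto_const_div_atTop_nhds_zero_nat (Real.log (v 1) / Real.log ρ))
  have hρn : Tendsto (ρ ^ ·) atTop (𝓝[>] 0) :=
    tendsto_nhdsWithin_of_tendsto_nhds_of_eventually_within _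
      (tendsto_pow_atTop_nhds_zero_of_lt_one hρ₀.le hρ₁) (Eventually.of_forall (pow_pos hρ₀))
  exact le_of_tendsto_of_tendsto (hD.comp hρn) hlim ((eventually_gt_atTop 0).mono hbound)

namespace IFS

variable {N : ℕ} (Φ : IFS N)

theorem dist_φ (i : Fin N) (x y : ℝ) : dist (Φ.φ i x) (Φ.φ i y) = Φ.r i * dist x y := by
  simp only [Real.dist_eq, Φ.similar]

theorem exists_affine (i : Fin N) :
    ∃ c b, c ≠ 0 ∧ |c| = Φ.r i ∧ Φ.φ i = fun x => c * x + b := by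
  obtain ⟨c, hc, h⟩ := exists_eq_mul_add_of_abs_sub_eq (Φ.similar i)
  refine ⟨c, _, ?_, hc, funext h⟩
  rintro rfl
  exact (Φ.r_pos i).ne' (by simpa using hc.symm)

theorem surjective_φ (i : Fin N) : Function.Surjective (Φ.φ i) := by
  obtain ⟨c, b, hc, -, hφ⟩ := Φ.exists_affine i
  exact fun y => ⟨(y - b) / c, by rw [hφ]; field_simp; ring⟩

theorem isOpenMap_φ (i : Fin N) : IsOpenMap (Φ.φ i) := by
  obtain ⟨c, b, hc, -, hφ⟩ := Φ.exists_affine i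
  rw [hφ]
  exact ((Homeomorph.mulLeft₀ c hc).trans (Homeomorph.addRight b)).isOpenMap

theorem volume_image_φ (i : Fin N) (A : Set ℝ) :
    volume (Φ.φ i '' A) = ENNReal.ofReal (Φ.r i) * volume A := by
  obtain ⟨c, b, -, hc, hφ⟩ := Φ.exists_affine i
  have : Φ.φ i '' A = (· + b) '' (c • A) := by rw [hφ, ← image_smul, image_image]; rfl
  rw [this, image_add_right, measure_preimage_add_right, Measure.addHaar_smul,
    Module.finrank_self, pow_one, hc]

theorem image_cthickening {A : Set ℝ} (hA : IsCompact A) (i : Fin N) {δ : ℝ} (hδ : 0 ≤ δ) :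
    Φ.φ i '' cthickening δ A = cthickening (Φ.r i * δ) (Φ.φ i '' A) :=
  hA.image_cthickening_of_dist_eq (Φ.surjective_φ i) (Φ.dist_φ i) (Φ.r_pos i) hδ

theorem map_mono : Monotone Φ.map := fun _ _ h => iUnion_mono fun _ => image_mono h

theorem isOpen_map {A : Set ℝ} (hA : IsOpen A) : IsOpen (Φ.map A) :=
  isOpen_iUnion fun i => Φ.isOpenMap_φ i A hA

theorem isOpen_iterate_map {A : Set ℝ} (hA : IsOpen A) (n : ℕ) : IsOpen (Φ.map^[n] A) := by
  induction n with
  | zero => exact hA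
  | succ n ih => rw [Function.iterate_succ_apply']; exact Φ.isOpen_map ih

theorem eventually_mapsTo_ball (p : ℝ) :
    ∀ᶠ R in atTop, ∀ i, MapsTo (Φ.φ i) (ball p R) (ball p R) := by
  refine eventually_all.2 fun i => ?_
  filter_upwards [eventually_ge_atTop (dist (Φ.φ i p) p / (1 - Φ.r i))] with R hR x hx
  rw [div_le_iff₀ (sub_pos.2 (Φ.r_lt_one i))] at hR
  rw [mem_ball] at hx ⊢
  calc dist (Φ.φ i x) p ≤ dist (Φ.φ i x) (Φ.φ i p) + dist (Φ.φ i p) p := dist_triangle _ _ _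
    _ < Φ.r i * R + dist (Φ.φ i p) p := by
      rw [Φ.dist_φ]; gcongr; exact Φ.r_pos i
    _ ≤ R := by linarith

variable {Φ} {O F : Set ℝ}

theorem Feasible.inter_ball (hO : Φ.Feasible O) {p R : ℝ} (hp : p ∈ O) (hR : 0 < R)
    (hball : ∀ i, MapsTo (Φ.φ i) (ball p R) (ball p R)) : Φ.Feasible (O ∩ ball p R) := by
  obtain ⟨-, hopen, hsub, hdisj⟩ := hO
  refine ⟨⟨p, hp, mem_ball_self hR⟩, hopen.inter isOpen_ball, fun i => ?_, fun i j hij => ?_⟩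
  · exact (image_inter_subset _ _ _).trans (inter_subset_inter (hsub i) (hball i).image_subset)
  · exact (hdisj i j hij).mono (image_mono inter_subset_left) (image_mono inter_subset_left)

theorem OSC.exists_feasible_isBounded (h : Φ.OSC) :
    ∃ O, Φ.Feasible O ∧ Bornology.IsBounded O := by
  obtain ⟨O, hO⟩ := h
  obtain ⟨p, hp⟩ := hO.1
  obtain ⟨R, hR, hball⟩ := ((eventually_gt_atTop 0).and (Φ.eventually_mapsTo_ball p)).exists
  exact ⟨_, hO.inter_ball hp hR hball, isBounded_ball.subset inter_subset_right⟩

theorem Feasible.map_subset (hO : Φ.Feasible O) : Φ.map O ⊆ O := iUnion_subset hO.2.2.1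

theorem Feasible.volume_map (hO : Φ.Feasible O) {A : Set ℝ} (hA : IsOpen A) (hAO : A ⊆ O) :
    volume (Φ.map A) = ENNReal.ofReal (∑ i, Φ.r i) * volume A := by
  rw [IFS.map, measure_iUnion ?_ fun i => (Φ.isOpenMap_φ i A hA).measurableSet, tsum_fintype,
    ENNReal.ofReal_sum_of_nonneg fun i _ => (Φ.r_pos i).le, Finset.sum_mul]
  · simp_rw [Φ.volume_image_φ]
  · exact fun i j hij => (hO.2.2.2 i j hij).mono (image_mono hAO) (image_mono hAO)

theorem Feasible.sum_r_le_one (hO : Φ.Feasible O) (hbdd : Bornology.IsBounded O) :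
    ∑ i, Φ.r i ≤ 1 := by
  have hpos : volume O ≠ 0 := (hO.2.1.measure_pos volume hO.1).ne'
  have hmap : ENNReal.ofReal (∑ i, Φ.r i) * volume O ≤ 1 * volume O := by
    rw [one_mul, ← hO.volume_map hO.2.1 subset_rfl]
    exact measure_mono hO.map_subset
  exact ENNReal.ofReal_le_one.1
    ((ENNReal.mul_le_mul_iff_left hpos hbdd.measure_lt_top.ne).1 hmap)

theorem Feasible.iterate_map_subset (hO : Φ.Feasible O) (n : ℕ) : Φ.map^[n] O ⊆ O := by
  induction n with
  | zero => exact subset_rfl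
  | succ n ih =>
    rw [Function.iterate_succ_apply']
    exact (Φ.map_mono ih).trans hO.map_subset

theorem Feasible.volume_iterate_map (hO : Φ.Feasible O) (hθ : ∑ i, Φ.r i = 1) (n : ℕ) :
    volume (Φ.map^[n] O) = volume O := by
  induction n with
  | zero => rfl
  | succ n ih =>
    rw [Function.iterate_succ_apply',
      hO.volume_map (Φ.isOpen_iterate_map hO.2.1 n) (hO.iterate_map_subset n), hθ,
      ENNReal.ofReal_one, one_mul, ih]

theorem IsAttractor.nonempty_index (hF : Φ.IsAttractor F) : Nonempty (Fin N) := by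
  obtain ⟨x, hx⟩ := hF.1
  rw [← hF.2.2, IFS.map, mem_iUnion] at hx
  obtain ⟨i, -⟩ := hx
  exact ⟨i⟩

theorem IsAttractor.volume_cthickening_mul_le (hF : Φ.IsAttractor F) {ρ ε : ℝ}
    (hρ : ∀ i, ρ ≤ Φ.r i) (hε : 0 ≤ ε) :
    volume (cthickening (ρ * ε) F) ≤ ENNReal.ofReal (∑ i, Φ.r i) * volume (cthickening ε F) := by
  obtain ⟨-, hcomp, hmap⟩ := hF
  calc volume (cthickening (ρ * ε) F) = volume (⋃ i, cthickening (ρ * ε) (Φ.φ i '' F)) := by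
        conv_lhs => rw [← hmap, IFS.map, cthickening_iUnion_of_finite]
    _ ≤ ∑ i, volume (cthickening (Φ.r i * ε) (Φ.φ i '' F)) :=
        (measure_iUnion_fintype_le _ _).trans (Finset.sum_le_sum fun i _ =>
          measure_mono (cthickening_mono (by gcongr; exact hρ i) _))
    _ = ENNReal.ofReal (∑ i, Φ.r i) * volume (cthickening ε F) := by
        simp_rw [← Φ.image_cthickening hcomp _ hε, Φ.volume_image_φ,
          ENNReal.ofReal_sum_of_nonneg fun i _ => (Φ.r_pos i).le, Finset.sum_mul]

theorem IsAttractor.one_le_sum_r (hF : Φ.IsAttractor F) (hdim : HasMinkowskiDim F 1) :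
    1 ≤ ∑ i, Φ.r i := by
  have := hF.nonempty_index
  obtain ⟨i₀, hi₀⟩ := Finite.exists_min Φ.r
  have hθ : 0 < ∑ i, Φ.r i := Finset.sum_pos (fun i _ => Φ.r_pos i) Finset.univ_nonempty
  have hdim_le := hdim.le_one_sub_log_div_log hF.1 hF.2.1.isBounded (Φ.r_pos i₀)
    (Φ.r_lt_one i₀) hθ fun ε hε => hF.volume_cthickening_mul_le hi₀ hε.le
  have hlog : Real.log (∑ i, Φ.r i) / Real.log (Φ.r i₀) ≤ 0 := by linarith
  rw [div_le_iff_of_neg (Real.log_neg (Φ.r_pos i₀) (Φ.r_lt_one i₀)), zero_mul] at hlog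
  exact (Real.log_nonneg_iff hθ).1 hlog

theorem map_cthickening_subset (hcomp : IsCompact F) (hmap : Φ.map F ⊆ F) {s δ : ℝ}
    (hs : ∀ i, Φ.r i ≤ s) (hδ : 0 ≤ δ) : Φ.map (cthickening δ F) ⊆ cthickening (s * δ) F :=
  iUnion_subset fun i => by
    rw [Φ.image_cthickening hcomp i hδ]
    exact (cthickening_mono (by gcongr; exact hs i) _).trans
      (cthickening_subset_of_subset _ ((subset_iUnion _ i).trans hmap))

theorem iterate_map_cthickening_subset (hcomp : IsCompact F) (hmap : Φ.map F ⊆ F) {s δ : ℝ}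
    (hs : ∀ i, Φ.r i ≤ s) (hs₀ : 0 ≤ s) (hδ : 0 ≤ δ) (n : ℕ) :
    Φ.map^[n] (cthickening δ F) ⊆ cthickening (s ^ n * δ) F := by
  induction n with
  | zero => simp
  | succ n ih =>
    rw [Function.iterate_succ_apply', pow_succ', mul_assoc]
    exact (Φ.map_mono ih).trans (map_cthickening_subset hcomp hmap hs (by positivity))

theorem IsAttractor.volume_le_of_feasible (hF : Φ.IsAttractor F) {O : Set ℝ}
    (hO : Φ.Feasible O) (hbdd : Bornology.IsBounded O) (hθ : ∑ i, Φ.r i = 1) :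
    volume O ≤ volume F := by
  have := hF.nonempty_index
  obtain ⟨⟨y, hy⟩, hcomp, hmap⟩ := hF
  obtain ⟨i₁, hi₁⟩ := Finite.exists_max Φ.r
  obtain ⟨δ, hδ, hOδ⟩ := hbdd.subset_closedBall_lt 0 y
  replace hOδ := hOδ.trans (closedBall_subset_cthickening hy δ)
  have hthick (ε : ℝ) (hε : 0 < ε) : volume O ≤ volume (cthickening ε F) := by
    obtain ⟨n, hn⟩ := exists_pow_lt_of_lt_one (div_pos hε hδ) (Φ.r_lt_one i₁)
    rw [lt_div_iff₀ hδ] at hn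
    calc volume O = volume (Φ.map^[n] O) := (hO.volume_iterate_map hθ n).symm
      _ ≤ volume (cthickening ε F) := measure_mono <| (Φ.map_mono.iterate n hOδ).trans <|
          (iterate_map_cthickening_subset hcomp hmap.le hi₁ (Φ.r_pos i₁).le hδ.le n).trans
            (cthickening_mono hn.le F)
  exact ge_of_tendsto ((tendsto_measure_cthickening_of_isCompact hcomp).mono_left
    nhdsWithin_le_nhds) (eventually_nhdsWithin_of_forall (s := Ioi 0) hthick)

end IFS

theorem full_dimension_minkowski_measurable_general {N : ℕ} (Φ : IFS N)
    (F : Set ℝ) (hOSC : Φ.OSC) (hF : Φ.IsAttractor F)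
    (hdim : HasMinkowskiDim F 1) :
    ∃ M : ℝ, 0 < M ∧
      Filter.Tendsto (fun ε : ℝ => (volume (Metric.cthickening ε F)).toReal)
        (𝓝[>] (0:ℝ)) (𝓝 M) := by
  obtain ⟨O, hO, hbdd⟩ := hOSC.exists_feasible_isBounded
  have hθ : ∑ i, Φ.r i = 1 := le_antisymm (hO.sum_r_le_one hbdd) (hF.one_le_sum_r hdim)
  have hpos : 0 < volume F :=
    (hO.2.1.measure_pos volume hO.1).trans_le (hF.volume_le_of_feasible hO hbdd hθ)
  have hfin : volume F ≠ ∞ := hF.2.1.measure_lt_top.ne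
  exact ⟨(volume F).toReal, ENNReal.toReal_pos hpos.ne' hfin, (ENNReal.tendsto_toReal hfin).comp
    ((tendsto_measure_cthickening_of_isCompact hF.2.1).mono_left nhdsWithin_le_nhds)⟩

/-- A self-similar set in `ℝ` of Minkowski dimension `1`
generated by an IFS satisfying OSC is Minkowski measurable:
`λ(F_ε)` converges to a positive finite limit as `ε → 0+`. -/
theorem full_dimension_minkowski_measurable {N : ℕ} (hN : 2 ≤ N) (Φ : IFS N)
    (F : Set ℝ) (hOSC : Φ.OSC) (hF : Φ.IsAttractor F)
    (hdim : HasMinkowskiDim F 1) :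
    ∃ M : ℝ, 0 < M ∧
      Filter.Tendsto (fun ε : ℝ => (volume (Metric.cthickening ε F)).toReal)
        (𝓝[>] (0:ℝ)) (𝓝 M) :=
  full_dimension_minkowski_measurable_general Φ F hOSC hF hdim
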